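/- arXiv:2507.03240 — 5 statements merged into one kernel-verified Lean document; each statement's English description precedes it below -/
import Mathlib

section
/- (Lipschitz continuity ofint the optimality operator, Theorem 1.) Let S, A be nonempty finite sets, P : S × A → Δ(S) a transition kernel, γ ∈ (0,1), H ≥ 1, and let r : S × A × ℝ^H → ℝ satisfy |r(s,a,λ₁) − r(s,a,λ₂)| ≤ L_r·‖λ₁ − λ₂‖₁ for all s, a, λ₁, λ₂. Let ρ > 0 and let Ω : Δ(A) → ℝ be continuous and ρ-strongly convex with respect to the ℓ¹ norm on ℝ^A. For each λ and s define q_λ^s(a) = r(s,a,λ) + γ·∑_{s'} (max_{a'} Q_λ*(s',a'))·P(s'|s,a), where Q_λ* is the unique fixed point of the Bellman optimality operator for reward r(·,·,λ), and define the policy Γ₁(s,λ) = argmax_{π ∈ Δ(A)} (∑_a q_λ^s(a)·π(a) − Ω(π)), which is unique by strong convexity. Then for all λ₁, λ₂ ∈ ℝ^H, sup_{s∈S} ‖Γ₁(s,λ₁) − Γ₁(s,λ₂)‖₁ ≤ (1/ρ)·(L_r + γ·L_r/(1−γ))·‖λ₁ − λ₂‖₁. -/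
/-! The maximizers `π₁ = Γ₁(s, λ₁)` and `π₂ = Γ₁(s, λ₂)` of the `ρ`-strongly concave objectives
`⟨q, π⟩ - Ω π` satisfy `ρ ‖π₁ - π₂‖₁² ≤ ⟨q₁ - q₂, π₁ - π₂⟩ ≤ ‖q₁ - q₂‖_∞ ‖π₁ - π₂‖₁`.
Here `q_λ` is the Bellman fixed point `Q_λ*` itself, and since the Bellman operator is a
`γ`-contraction depending `L_r`-Lipschitzly on `λ`,
`‖Q_λ₁* - Q_λ₂*‖_∞ ≤ L_r ‖λ₁ - λ₂‖₁ / (1 - γ) = (L_r + γ L_r / (1 - γ)) ‖λ₁ - λ₂‖₁`. -/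

open Finset Filter Topology

lemma le_of_forall_mul_one_sub_le {c X : ℝ} (h : ∀ t ∈ Set.Ioc (0 : ℝ) 1, c * (1 - t) ≤ X) :
    c ≤ X := by
  have hlim : Tendsto (fun t : ℝ => c * (1 - t)) (𝓝[>] 0) (𝓝 c) := by
    have hcont : Continuous fun t : ℝ => c * (1 - t) := by fun_prop
    simpa using hcont.continuousWithinAt.tendsto (x := 0) (s := Set.Ioi 0)
  exact le_of_tendsto hlim (eventually_of_mem (Ioc_mem_nhdsGT one_pos) h)

lemma abs_ciSup_sub_ciSup_le {ι : Type*} [Finite ι] [Nonempty ι] {f g : ι → ℝ} {M : ℝ}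
    (h : ∀ i, |f i - g i| ≤ M) : |(⨆ i, f i) - ⨆ i, g i| ≤ M := by
  have hf (i : ι) : f i ≤ ⨆ i, f i := le_ciSup (Set.finite_range f).bddAbove i
  have hg (i : ι) : g i ≤ ⨆ i, g i := le_ciSup (Set.finite_range g).bddAbove i
  rw [abs_sub_le_iff, sub_le_iff_le_add, sub_le_iff_le_add]
  exact ⟨ciSup_le fun i => by linarith [(abs_le.1 (h i)).2, hg i],
    ciSup_le fun i => by linarith [(abs_le.1 (h i)).1, hf i]⟩

lemma abs_sum_mul_le_of_mem_stdSimplex {ι : Type*} [Fintype ι] {w v : ι → ℝ} {M : ℝ}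
    (hw : w ∈ stdSimplex ℝ ι) (hv : ∀ i, |v i| ≤ M) : |∑ i, w i * v i| ≤ M :=
  calc |∑ i, w i * v i| ≤ ∑ i, w i * |v i| := by
        refine (abs_sum_le_sum_abs _ _).trans_eq (sum_congr rfl fun i _ => ?_)
        rw [abs_mul, abs_of_nonneg (hw.1 i)]
    _ ≤ ∑ i, w i * M := sum_le_sum fun i _ => mul_le_mul_of_nonneg_left (hv i) (hw.1 i)
    _ = M := by rw [← sum_mul, hw.2, one_mul]

lemma IsMaxOn.add_le_of_concave_segment {E : Type*} [AddCommGroup E] [Module ℝ E] {s : Set E}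
    {f : E → ℝ} {x y : E} {c : ℝ} (hs : Convex ℝ s) (hx : x ∈ s) (hy : y ∈ s)
    (hmax : IsMaxOn f s x)
    (hf : ∀ t ∈ Set.Ioc (0 : ℝ) 1,
      t * f y + (1 - t) * f x + c * t * (1 - t) ≤ f (t • y + (1 - t) • x)) :
    f y + c ≤ f x := by
  suffices ∀ t ∈ Set.Ioc (0 : ℝ) 1, c * (1 - t) ≤ f x - f y by
    linarith [le_of_forall_mul_one_sub_le this]
  intro t ht
  have hxt : f (t • y + (1 - t) • x) ≤ f x :=
    hmax (hs hy hx ht.1.le (by linarith [ht.2]) (by ring))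
  have : t * (c * (1 - t)) ≤ t * (f x - f y) := by linarith [hf t ht]
  exact le_of_mul_le_mul_left this ht.1

section Regularized

variable {A : Type*} [Fintype A]

def StrongConvexOnStdSimplexL1 (ρ : ℝ) (Ω : (A → ℝ) → ℝ) : Prop :=
  ∀ π π' : A → ℝ, π ∈ stdSimplex ℝ A → π' ∈ stdSimplex ℝ A → ∀ t ∈ Set.Icc (0 : ℝ) 1,
    Ω (t • π + (1 - t) • π') ≤
      t * Ω π + (1 - t) * Ω π' - (ρ / 2) * t * (1 - t) * (∑ a, |π a - π' a|) ^ 2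

lemma StrongConvexOnStdSimplexL1.add_sq_le_of_isMaxOn {ρ : ℝ} {Ω : (A → ℝ) → ℝ}
    (hΩ : StrongConvexOnStdSimplexL1 ρ Ω) {q π₁ π₂ : A → ℝ}
    (hπ₁ : π₁ ∈ stdSimplex ℝ A) (hπ₂ : π₂ ∈ stdSimplex ℝ A)
    (hmax : IsMaxOn (fun π => ∑ a, q a * π a - Ω π) (stdSimplex ℝ A) π₁) :
    (∑ a, q a * π₂ a - Ω π₂) + ρ / 2 * (∑ a, |π₁ a - π₂ a|) ^ 2 ≤ ∑ a, q a * π₁ a - Ω π₁ := by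
  refine hmax.add_le_of_concave_segment (convex_stdSimplex ℝ A) hπ₁ hπ₂ fun t ht => ?_
  have hlin : ∑ a, q a * (t • π₂ + (1 - t) • π₁) a =
      t * ∑ a, q a * π₂ a + (1 - t) * ∑ a, q a * π₁ a := by
    rw [mul_sum, mul_sum, ← sum_add_distrib]
    refine sum_congr rfl fun a _ => ?_
    simp only [Pi.add_apply, Pi.smul_apply, smul_eq_mul]
    ring
  have hΩt := hΩ π₂ π₁ hπ₂ hπ₁ t ⟨ht.1.le, ht.2⟩
  simp only [abs_sub_comm (π₂ _)] at hΩt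
  simp only [hlin]
  linarith

lemma StrongConvexOnStdSimplexL1.mul_sum_abs_sub_le_of_isMaxOn {ρ : ℝ} {Ω : (A → ℝ) → ℝ}
    (hΩ : StrongConvexOnStdSimplexL1 ρ Ω) {q₁ q₂ π₁ π₂ : A → ℝ} {K : ℝ}
    (hπ₁ : π₁ ∈ stdSimplex ℝ A) (hπ₂ : π₂ ∈ stdSimplex ℝ A)
    (hmax₁ : IsMaxOn (fun π => ∑ a, q₁ a * π a - Ω π) (stdSimplex ℝ A) π₁)
    (hmax₂ : IsMaxOn (fun π => ∑ a, q₂ a * π a - Ω π) (stdSimplex ℝ A) π₂)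
    (hq : ∀ a, |q₁ a - q₂ a| ≤ K) :
    ρ * ∑ a, |π₁ a - π₂ a| ≤ K := by
  set d := ∑ a, |π₁ a - π₂ a|
  have gap₁ := hΩ.add_sq_le_of_isMaxOn hπ₁ hπ₂ hmax₁
  have gap₂ := hΩ.add_sq_le_of_isMaxOn hπ₂ hπ₁ hmax₂
  simp only [abs_sub_comm (π₂ _)] at gap₂
  have hmono : ρ * d ^ 2 ≤ ∑ a, (q₁ a - q₂ a) * (π₁ a - π₂ a) := by
    simp only [sub_mul, mul_sub, sum_sub_distrib]
    linarith
  have hholder : ∑ a, (q₁ a - q₂ a) * (π₁ a - π₂ a) ≤ K * d := by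
    rw [mul_sum]
    refine sum_le_sum fun a _ => (le_abs_self _).trans ?_
    rw [abs_mul]
    exact mul_le_mul_of_nonneg_right (hq a) (abs_nonneg _)
  rcases (sum_nonneg fun a _ => abs_nonneg (π₁ a - π₂ a) : 0 ≤ d).eq_or_lt with hd | hd
  · obtain ⟨a, -, -⟩ := exists_ne_zero_of_sum_ne_zero (hπ₁.2.symm ▸ one_ne_zero)
    rw [show d = 0 from hd.symm, mul_zero]
    exact (abs_nonneg _).trans (hq a)
  · exact le_of_mul_le_mul_right (by nlinarith) hd

end Regularized

section Bellman

variable {S A : Type*} [Fintype S] [Fintype A]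

noncomputable def bellmanOptimality (P : S → A → S → ℝ) (γ : ℝ) (R Q : S → A → ℝ) : S → A → ℝ :=
  fun s a => R s a + γ * ∑ s', P s a s' * ⨆ a', Q s' a'

lemma abs_apply_sub_apply_le_norm_sub (Q₁ Q₂ : S → A → ℝ) (s : S) (a : A) :
    |Q₁ s a - Q₂ s a| ≤ ‖Q₁ - Q₂‖ :=
  (norm_le_pi_norm ((Q₁ - Q₂) s) a).trans (norm_le_pi_norm (Q₁ - Q₂) s)

variable {P : S → A → S → ℝ} {γ : ℝ}

lemma abs_bellmanOptimality_sub_le [Nonempty A] (hP : ∀ s a, P s a ∈ stdSimplex ℝ S)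
    (hγ : 0 ≤ γ) (R₁ R₂ Q₁ Q₂ : S → A → ℝ) (s : S) (a : A) :
    |bellmanOptimality P γ R₁ Q₁ s a - bellmanOptimality P γ R₂ Q₂ s a| ≤
      |R₁ s a - R₂ s a| + γ * ‖Q₁ - Q₂‖ := by
  have hV (s' : S) : |(⨆ a', Q₁ s' a') - ⨆ a', Q₂ s' a'| ≤ ‖Q₁ - Q₂‖ :=
    abs_ciSup_sub_ciSup_le fun a' => abs_apply_sub_apply_le_norm_sub Q₁ Q₂ s' a'
  have hsplit : bellmanOptimality P γ R₁ Q₁ s a - bellmanOptimality P γ R₂ Q₂ s a =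
      (R₁ s a - R₂ s a) + γ * ∑ s', P s a s' * ((⨆ a', Q₁ s' a') - ⨆ a', Q₂ s' a') := by
    simp only [bellmanOptimality, mul_sub, sum_sub_distrib]
    ring
  calc _ ≤ |R₁ s a - R₂ s a| + |γ * ∑ s', P s a s' * ((⨆ a', Q₁ s' a') - ⨆ a', Q₂ s' a')| := by
        rw [hsplit]
        exact abs_add_le _ _
    _ = |R₁ s a - R₂ s a| + γ * |∑ s', P s a s' * ((⨆ a', Q₁ s' a') - ⨆ a', Q₂ s' a')| := by
        rw [abs_mul, abs_of_nonneg hγ]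
    _ ≤ |R₁ s a - R₂ s a| + γ * ‖Q₁ - Q₂‖ := by
        gcongr
        exact abs_sum_mul_le_of_mem_stdSimplex (hP s a) hV

lemma abs_sub_le_of_bellmanOptimality_eq (hP : ∀ s a, P s a ∈ stdSimplex ℝ S)
    (hγ₀ : 0 ≤ γ) (hγ₁ : γ < 1) {R₁ R₂ Q₁ Q₂ : S → A → ℝ} {ε : ℝ}
    (hQ₁ : bellmanOptimality P γ R₁ Q₁ = Q₁) (hQ₂ : bellmanOptimality P γ R₂ Q₂ = Q₂)
    (hR : ∀ s a, |R₁ s a - R₂ s a| ≤ ε) (s : S) (a : A) :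
    |Q₁ s a - Q₂ s a| ≤ ε / (1 - γ) := by
  have : Nonempty A := ⟨a⟩
  have hε : 0 ≤ ε := (abs_nonneg _).trans (hR s a)
  have hcontr : ‖Q₁ - Q₂‖ ≤ ε + γ * ‖Q₁ - Q₂‖ := by
    refine (pi_norm_le_iff_of_nonneg (by positivity)).2 fun s =>
      (pi_norm_le_iff_of_nonneg (by positivity)).2 fun a => ?_
    calc ‖(Q₁ - Q₂) s a‖
        = |bellmanOptimality P γ R₁ Q₁ s a - bellmanOptimality P γ R₂ Q₂ s a| := by
          rw [hQ₁, hQ₂, Real.norm_eq_abs, Pi.sub_apply, Pi.sub_apply]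
      _ ≤ |R₁ s a - R₂ s a| + γ * ‖Q₁ - Q₂‖ := abs_bellmanOptimality_sub_le hP hγ₀ _ _ _ _ s a
      _ ≤ ε + γ * ‖Q₁ - Q₂‖ := by gcongr; exact hR s a
  rw [le_div_iff₀ (by linarith)]
  nlinarith [abs_apply_sub_apply_le_norm_sub Q₁ Q₂ s a]

end Bellman

theorem stmt7_general {S A : Type*} [Fintype S] [Fintype A] [Nonempty S]
    (P : S → A → S → ℝ)
    (hP : ∀ s a, (∀ s', 0 ≤ P s a s') ∧ ∑ s', P s a s' = 1)
    (γ : ℝ) (hγ : γ ∈ Set.Ioo (0 : ℝ) 1)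
    {H : ℕ}
    (r : S → A → (Fin H → ℝ) → ℝ) (Lr : ℝ)
    (hr : ∀ s a (lam₁ lam₂ : Fin H → ℝ),
      |r s a lam₁ - r s a lam₂| ≤ Lr * ∑ h, |lam₁ h - lam₂ h|)
    (ρ : ℝ) (hρ : 0 < ρ)
    (Ω : (A → ℝ) → ℝ)
    (hΩ_sc : ∀ π π' : A → ℝ,
      π ∈ {p : A → ℝ | (∀ a, 0 ≤ p a) ∧ ∑ a, p a = 1} →
      π' ∈ {p : A → ℝ | (∀ a, 0 ≤ p a) ∧ ∑ a, p a = 1} →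
      ∀ t ∈ Set.Icc (0 : ℝ) 1,
        Ω (t • π + (1 - t) • π') ≤
          t * Ω π + (1 - t) * Ω π' - (ρ / 2) * t * (1 - t) * (∑ a, |π a - π' a|) ^ 2)
    (Qstar : (Fin H → ℝ) → S → A → ℝ)
    (hQ : ∀ lam s a,
      Qstar lam s a = r s a lam + γ * ∑ s', P s a s' * (⨆ a', Qstar lam s' a'))
    (q : (Fin H → ℝ) → S → A → ℝ)
    (hq : ∀ lam s a,
      q lam s a = r s a lam + γ * ∑ s', (⨆ a', Qstar lam s' a') * P s a s')
    (Γ₁ : S → (Fin H → ℝ) → A → ℝ)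
    (hΓ₁ : ∀ s lam,
      Γ₁ s lam ∈ {p : A → ℝ | (∀ a, 0 ≤ p a) ∧ ∑ a, p a = 1} ∧
      IsMaxOn (fun π => ∑ a, q lam s a * π a - Ω π)
        {p : A → ℝ | (∀ a, 0 ≤ p a) ∧ ∑ a, p a = 1} (Γ₁ s lam)) :
    ∀ lam₁ lam₂ : Fin H → ℝ,
      (⨆ s : S, ∑ a, |Γ₁ s lam₁ a - Γ₁ s lam₂ a|) ≤
        (1 / ρ) * (Lr + γ * Lr / (1 - γ)) * ∑ h, |lam₁ h - lam₂ h| := by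
  intro lam₁ lam₂
  obtain ⟨hγ₀, hγ₁⟩ := hγ
  have hq_eq : q = Qstar := by
    ext lam s a
    simp only [hq, hQ lam s a, mul_comm (⨆ a', Qstar lam _ a')]
  have hfix (lam : Fin H → ℝ) :
      bellmanOptimality P γ (fun s a => r s a lam) (Qstar lam) = Qstar lam :=
    funext₂ fun s a => (hQ lam s a).symm
  have hQ_dist (s : S) (a : A) :
      |q lam₁ s a - q lam₂ s a| ≤ Lr * (∑ h, |lam₁ h - lam₂ h|) / (1 - γ) := by
    rw [hq_eq]
    exact abs_sub_le_of_bellmanOptimality_eq hP hγ₀.le hγ₁ (hfix lam₁) (hfix lam₂)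
      (fun s a => hr s a lam₁ lam₂) s a
  have hconst : (1 / ρ) * (Lr + γ * Lr / (1 - γ)) * ∑ h, |lam₁ h - lam₂ h| =
      Lr * (∑ h, |lam₁ h - lam₂ h|) / (1 - γ) / ρ := by
    field_simp [(by linarith : (1 - γ) ≠ 0)]
    ring
  rw [hconst]
  refine ciSup_le fun s => (le_div_iff₀' hρ).2 ?_
  exact StrongConvexOnStdSimplexL1.mul_sum_abs_sub_le_of_isMaxOn hΩ_sc (hΓ₁ s lam₁).1
    (hΓ₁ s lam₂).1 (hΓ₁ s lam₁).2 (hΓ₁ s lam₂).2 (hQ_dist s)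

/-- Theorem 1, Lipschitz continuity of the optimality operator:
with `q_λ^s(a) = r(s,a,λ) + γ * ∑_{s'} (max_{a'} Q_λ*(s',a')) * P(s'|s,a)` and
`Γ₁(s,λ) = argmax_{π ∈ Δ(A)} (∑_a q_λ^s(a) π(a) - Ω(π))` for `Ω` continuous and
ρ-strongly convex w.r.t. the ℓ¹ norm on `Δ(A)`,
`sup_s ‖Γ₁(s,λ₁) - Γ₁(s,λ₂)‖₁ ≤ (1/ρ)(L_r + γ L_r/(1-γ)) ‖λ₁ - λ₂‖₁`. -/
theorem stmt7 {S A : Type*} [Fintype S] [Fintype A] [Nonempty S] [Nonempty A]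
    (P : S → A → S → ℝ)
    (hP : ∀ s a, (∀ s', 0 ≤ P s a s') ∧ ∑ s', P s a s' = 1)
    (γ : ℝ) (hγ : γ ∈ Set.Ioo (0 : ℝ) 1)
    {H : ℕ} (hH : 1 ≤ H)
    (r : S → A → (Fin H → ℝ) → ℝ) (Lr : ℝ)
    (hr : ∀ s a (lam₁ lam₂ : Fin H → ℝ),
      |r s a lam₁ - r s a lam₂| ≤ Lr * ∑ h, |lam₁ h - lam₂ h|)
    (ρ : ℝ) (hρ : 0 < ρ)
    (Ω : (A → ℝ) → ℝ)
    (hΩ_cont : ContinuousOn Ω {p : A → ℝ | (∀ a, 0 ≤ p a) ∧ ∑ a, p a = 1})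
    (hΩ_sc : ∀ π π' : A → ℝ,
      π ∈ {p : A → ℝ | (∀ a, 0 ≤ p a) ∧ ∑ a, p a = 1} →
      π' ∈ {p : A → ℝ | (∀ a, 0 ≤ p a) ∧ ∑ a, p a = 1} →
      ∀ t ∈ Set.Icc (0 : ℝ) 1,
        Ω (t • π + (1 - t) • π') ≤
          t * Ω π + (1 - t) * Ω π' - (ρ / 2) * t * (1 - t) * (∑ a, |π a - π' a|) ^ 2)
    (Qstar : (Fin H → ℝ) → S → A → ℝ)
    (hQ : ∀ lam s a,
      Qstar lam s a = r s a lam + γ * ∑ s', P s a s' * (⨆ a', Qstar lam s' a'))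
    (q : (Fin H → ℝ) → S → A → ℝ)
    (hq : ∀ lam s a,
      q lam s a = r s a lam + γ * ∑ s', (⨆ a', Qstar lam s' a') * P s a s')
    (Γ₁ : S → (Fin H → ℝ) → A → ℝ)
    (hΓ₁ : ∀ s lam,
      Γ₁ s lam ∈ {p : A → ℝ | (∀ a, 0 ≤ p a) ∧ ∑ a, p a = 1} ∧
      IsMaxOn (fun π => ∑ a, q lam s a * π a - Ω π)
        {p : A → ℝ | (∀ a, 0 ≤ p a) ∧ ∑ a, p a = 1} (Γ₁ s lam)) :
    ∀ lam₁ lam₂ : Fin H → ℝ,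
      (⨆ s : S, ∑ a, |Γ₁ s lam₁ a - Γ₁ s lam₂ a|) ≤
        (1 / ρ) * (Lr + γ * Lr / (1 - γ)) * ∑ h, |lam₁ h - lam₂ h| :=
  stmt7_general P hP γ hγ r Lr hr ρ hρ Ω hΩ_sc Qstar hQ q hq Γ₁ hΓ₁
end

section
/- Let S and A be nonempty finite sets, let P : S × A → Δ(S) be a transition kernel, let L ∈ Δ(S × A) be a probability distribution, and let π, π' : S → Δ(A) be two policies. Define the mean-field transition operator Γ̃₂(L, π)(s', a') = ∑_{(s,a) ∈ S×A} L(s,a) · P(s' | s, a') · π(a' | s). Then ‖Γ̃₂(L, π) − Γ̃₂(L, π')‖₁ ≤ sup_{s∈S} ‖π(· | s) − π'(· | s)‖₁. -/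
open scoped BigOperators

/-- The mean-field transition operator
`Γ̃₂(L,π)(s',a') = ∑_{(s,a)} L(s,a) · P(s'|s,a') · π(a'|s)` satisfies
`‖Γ̃₂(L,π) - Γ̃₂(L,π')‖₁ ≤ sup_s ‖π(·|s) - π'(·|s)‖₁`. Here `P s a s'` denotes
`P(s'|s,a)` and `π s a` denotes `π(a|s)`. -/
theorem stmt9 {S A : Type*} [Fintype S] [Fintype A] [Nonempty S] [Nonempty A]
    (P : S → A → S → ℝ)
    (hP : ∀ s a, (∀ s', 0 ≤ P s a s') ∧ ∑ s', P s a s' = 1)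
    (L : S × A → ℝ)
    (hL : (∀ p, 0 ≤ L p) ∧ ∑ p, L p = 1)
    (π π' : S → A → ℝ)
    (hπ : ∀ s, (∀ a, 0 ≤ π s a) ∧ ∑ a, π s a = 1)
    (hπ' : ∀ s, (∀ a, 0 ≤ π' s a) ∧ ∑ a, π' s a = 1) :
    ∑ q : S × A,
        |(∑ p : S × A, L p * P p.1 q.2 q.1 * π p.1 q.2) -
          ∑ p : S × A, L p * P p.1 q.2 q.1 * π' p.1 q.2| ≤
      ⨆ s : S, ∑ a, |π s a - π' s a| := by
  set M : ℝ := ⨆ s : S, ∑ a, |π s a - π' s a| with hM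
  have hbdd : BddAbove (Set.range fun s : S => ∑ a, |π s a - π' s a|) :=
    Set.Finite.bddAbove (Set.finite_range _)
  have hle : ∀ s : S, ∑ a, |π s a - π' s a| ≤ M := fun s => le_ciSup hbdd s
  calc
    ∑ q : S × A,
        |(∑ p : S × A, L p * P p.1 q.2 q.1 * π p.1 q.2) -
          ∑ p : S × A, L p * P p.1 q.2 q.1 * π' p.1 q.2|
      ≤ ∑ q : S × A, ∑ p : S × A, L p * P p.1 q.2 q.1 * |π p.1 q.2 - π' p.1 q.2| := by
        refine Finset.sum_le_sum fun q _ => ?_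
        rw [← Finset.sum_sub_distrib]
        refine (Finset.abs_sum_le_sum_abs _ _).trans (Finset.sum_le_sum fun p _ => ?_)
        have : L p * P p.1 q.2 q.1 * π p.1 q.2 - L p * P p.1 q.2 q.1 * π' p.1 q.2
            = L p * P p.1 q.2 q.1 * (π p.1 q.2 - π' p.1 q.2) := by ring
        rw [this, abs_mul, abs_of_nonneg (mul_nonneg (hL.1 p) ((hP p.1 q.2).1 q.1))]
    _ = ∑ p : S × A, L p * ∑ a, |π p.1 a - π' p.1 a| := by
        rw [Finset.sum_comm]
        refine Finset.sum_congr rfl fun p _ => ?_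
        rw [Finset.mul_sum]
        rw [Fintype.sum_prod_type]
        rw [Finset.sum_comm]
        refine Finset.sum_congr rfl fun a _ => ?_
        have : ∀ s' : S, L p * P p.1 a s' * |π p.1 a - π' p.1 a|
            = (L p * |π p.1 a - π' p.1 a|) * P p.1 a s' := fun s' => by ring
        simp_rw [this]
        rw [← Finset.mul_sum, (hP p.1 a).2, mul_one]
    _ ≤ ∑ p : S × A, L p * M :=
        Finset.sum_le_sum fun p _ =>
          mul_le_mul_of_nonneg_left (hle p.1) (hL.1 p)
    _ = M := by rw [← Finset.sum_mul, hL.2, one_mul]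
end

section
/- (Lipschitz continuity of the consistency operator, Theorem 2.) Let S and A be nonempty finite sets, P : S × A → Δ(S) a transition kernel, and ζ ∈ (0,1). Define the consistency operator on pairs of a distribution L ∈ Δ(S × A) and a policy π : S → Δ(A) by Γ₂(L, π)(s', a') = ζ/(|S|·|A|) + (1 − ζ)·∑_{(s,a)} L(s,a)·P(s' | s, a')·π(a' | s). Then for any distributions L, L' ∈ Δ(S × A) and any policies π, π', ‖Γ₂(L, π) − Γ₂(L', π')‖₁ ≤ (1 − ζ)·( ‖L − L'‖₁ + sup_{s∈S} ‖π(· | s) − π'(· | s)‖₁ ). In particular, ‖Γ₂(L,π) − Γ₂(L',π)‖₁ ≤ (1−ζ)‖L − L'‖₁ and ‖Γ₂(L,π) − Γ₂(L,π')‖₁ ≤ (1−ζ)·sup_s ‖π(·|s) − π'(·|s)‖₁. -/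
open scoped BigOperators

/-- Theorem 2, Lipschitz continuity of the consistency operator:
with `Γ₂(L,π)(s',a') = ζ/(|S||A|) + (1-ζ) ∑_{(s,a)} L(s,a) P(s'|s,a') π(a'|s)`,
`‖Γ₂(L,π) - Γ₂(L',π')‖₁ ≤ (1-ζ)(‖L - L'‖₁ + sup_s ‖π(·|s) - π'(·|s)‖₁)`, and in
particular `‖Γ₂(L,π) - Γ₂(L',π)‖₁ ≤ (1-ζ)‖L - L'‖₁` and
`‖Γ₂(L,π) - Γ₂(L,π')‖₁ ≤ (1-ζ) sup_s ‖π(·|s) - π'(·|s)‖₁`. -/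
theorem stmt11 {S A : Type*} [Fintype S] [Fintype A] [Nonempty S] [Nonempty A]
    (P : S → A → S → ℝ)
    (hP : ∀ s a, (∀ s', 0 ≤ P s a s') ∧ ∑ s', P s a s' = 1)
    (ζ : ℝ) (hζ : ζ ∈ Set.Ioo (0 : ℝ) 1)
    (Γ₂ : (S × A → ℝ) → (S → A → ℝ) → S × A → ℝ)
    (hΓ₂ : ∀ (L : S × A → ℝ) (π : S → A → ℝ) (q : S × A),
      Γ₂ L π q = ζ / ((Fintype.card S : ℝ) * (Fintype.card A : ℝ)) +
        (1 - ζ) * ∑ p : S × A, L p * P p.1 q.2 q.1 * π p.1 q.2)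
    (L L' : S × A → ℝ)
    (hL : (∀ p, 0 ≤ L p) ∧ ∑ p, L p = 1)
    (hL' : (∀ p, 0 ≤ L' p) ∧ ∑ p, L' p = 1)
    (π π' : S → A → ℝ)
    (hπ : ∀ s, (∀ a, 0 ≤ π s a) ∧ ∑ a, π s a = 1)
    (hπ' : ∀ s, (∀ a, 0 ≤ π' s a) ∧ ∑ a, π' s a = 1) :
    (∑ q : S × A, |Γ₂ L π q - Γ₂ L' π' q| ≤
      (1 - ζ) * ((∑ p : S × A, |L p - L' p|) + ⨆ s : S, ∑ a, |π s a - π' s a|)) ∧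
    (∑ q : S × A, |Γ₂ L π q - Γ₂ L' π q| ≤ (1 - ζ) * ∑ p : S × A, |L p - L' p|) ∧
    (∑ q : S × A, |Γ₂ L π q - Γ₂ L π' q| ≤
      (1 - ζ) * ⨆ s : S, ∑ a, |π s a - π' s a|) := by
  have hζ1 : (0:ℝ) ≤ 1 - ζ := by linarith [hζ.2]
  set D : ℝ := ⨆ s : S, ∑ a, |π s a - π' s a| with hD
  have hbdd : BddAbove (Set.range fun s : S => ∑ a, |π s a - π' s a|) :=
    Set.Finite.bddAbove (Set.finite_range _)
  have hDle : ∀ s, ∑ a, |π s a - π' s a| ≤ D := fun s => le_ciSup hbdd s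
  -- Part A : same policy
  have keyA : ∀ (M M' : S × A → ℝ) (ρ : S → A → ℝ),
      (∀ s, (∀ a, 0 ≤ ρ s a) ∧ ∑ a, ρ s a = 1) →
      ∑ q : S × A, |Γ₂ M ρ q - Γ₂ M' ρ q| ≤ (1 - ζ) * ∑ p : S × A, |M p - M' p| := by
    intro M M' ρ hρ
    have hdiff : ∀ q : S × A, Γ₂ M ρ q - Γ₂ M' ρ q =
        (1 - ζ) * ∑ p : S × A, (M p - M' p) * P p.1 q.2 q.1 * ρ p.1 q.2 := by
      intro q
      rw [hΓ₂, hΓ₂]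
      have h : ∑ p : S × A, (M p - M' p) * P p.1 q.2 q.1 * ρ p.1 q.2
          = (∑ p : S × A, M p * P p.1 q.2 q.1 * ρ p.1 q.2)
            - ∑ p : S × A, M' p * P p.1 q.2 q.1 * ρ p.1 q.2 := by
        rw [← Finset.sum_sub_distrib]
        exact Finset.sum_congr rfl fun p _ => by ring
      rw [h]; ring
    calc ∑ q : S × A, |Γ₂ M ρ q - Γ₂ M' ρ q|
        ≤ ∑ q : S × A, (1 - ζ) * ∑ p : S × A, |M p - M' p| * P p.1 q.2 q.1 * ρ p.1 q.2 := by
          apply Finset.sum_le_sum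
          intro q _
          rw [hdiff q, abs_mul, abs_of_nonneg hζ1]
          apply mul_le_mul_of_nonneg_left _ hζ1
          refine le_trans (Finset.abs_sum_le_sum_abs _ _) (Finset.sum_le_sum ?_)
          intro p _
          rw [abs_mul, abs_mul, abs_of_nonneg ((hP p.1 q.2).1 q.1),
            abs_of_nonneg ((hρ p.1).1 q.2)]
      _ = (1 - ζ) * ∑ p : S × A, |M p - M' p| := by
          rw [← Finset.mul_sum]
          congr 1
          rw [Finset.sum_comm]
          apply Finset.sum_congr rfl
          intro p _
          rw [Fintype.sum_prod_type_right]
          have h1 : ∀ a' : A, ∑ s' : S, |M p - M' p| * P p.1 a' s' * ρ p.1 a'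
              = |M p - M' p| * ρ p.1 a' := by
            intro a'
            calc ∑ s' : S, |M p - M' p| * P p.1 a' s' * ρ p.1 a'
                = ∑ s' : S, (|M p - M' p| * ρ p.1 a') * P p.1 a' s' :=
                  Finset.sum_congr rfl fun _ _ => by ring
              _ = |M p - M' p| * ρ p.1 a' := by
                  rw [← Finset.mul_sum, (hP p.1 a').2, mul_one]
          simp_rw [h1]
          rw [← Finset.mul_sum, (hρ p.1).2, mul_one]
  -- Part B : same distribution
  have keyB : ∀ (M : S × A → ℝ), (∀ p, 0 ≤ M p) → (∑ p, M p = 1) →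
      ∑ q : S × A, |Γ₂ M π q - Γ₂ M π' q| ≤ (1 - ζ) * D := by
    intro M hM0 hM1
    have hdiff : ∀ q : S × A, Γ₂ M π q - Γ₂ M π' q =
        (1 - ζ) * ∑ p : S × A, M p * P p.1 q.2 q.1 * (π p.1 q.2 - π' p.1 q.2) := by
      intro q
      rw [hΓ₂, hΓ₂]
      have h : ∑ p : S × A, M p * P p.1 q.2 q.1 * (π p.1 q.2 - π' p.1 q.2)
          = (∑ p : S × A, M p * P p.1 q.2 q.1 * π p.1 q.2)
            - ∑ p : S × A, M p * P p.1 q.2 q.1 * π' p.1 q.2 := by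
        rw [← Finset.sum_sub_distrib]
        exact Finset.sum_congr rfl fun p _ => by ring
      rw [h]; ring
    calc ∑ q : S × A, |Γ₂ M π q - Γ₂ M π' q|
        ≤ ∑ q : S × A, (1 - ζ) * ∑ p : S × A,
            M p * P p.1 q.2 q.1 * |π p.1 q.2 - π' p.1 q.2| := by
          apply Finset.sum_le_sum
          intro q _
          rw [hdiff q, abs_mul, abs_of_nonneg hζ1]
          apply mul_le_mul_of_nonneg_left _ hζ1
          refine le_trans (Finset.abs_sum_le_sum_abs _ _) (Finset.sum_le_sum ?_)
          intro p _
          rw [abs_mul, abs_mul, abs_of_nonneg (hM0 p),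
            abs_of_nonneg ((hP p.1 q.2).1 q.1)]
      _ = (1 - ζ) * ∑ p : S × A, M p * ∑ a', |π p.1 a' - π' p.1 a'| := by
          rw [← Finset.mul_sum]
          congr 1
          rw [Finset.sum_comm]
          apply Finset.sum_congr rfl
          intro p _
          rw [Fintype.sum_prod_type_right]
          have h1 : ∀ a' : A, ∑ s' : S, M p * P p.1 a' s' * |π p.1 a' - π' p.1 a'|
              = M p * |π p.1 a' - π' p.1 a'| := by
            intro a'
            calc ∑ s' : S, M p * P p.1 a' s' * |π p.1 a' - π' p.1 a'|
                = ∑ s' : S, (M p * |π p.1 a' - π' p.1 a'|) * P p.1 a' s' :=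
                  Finset.sum_congr rfl fun _ _ => by ring
              _ = M p * |π p.1 a' - π' p.1 a'| := by
                  rw [← Finset.mul_sum, (hP p.1 a').2, mul_one]
          simp_rw [h1]
          rw [Finset.mul_sum]
      _ ≤ (1 - ζ) * ∑ p : S × A, M p * D := by
          gcongr with p
          exacts [hM0 p, hDle p.1]
      _ = (1 - ζ) * D := by
          rw [← Finset.sum_mul, hM1, one_mul]
  have h2 := keyA L L' π hπ
  have h3 := keyB L hL.1 hL.2
  refine ⟨?_, h2, h3⟩
  calc ∑ q : S × A, |Γ₂ L π q - Γ₂ L' π' q|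
      ≤ ∑ q : S × A, (|Γ₂ L π q - Γ₂ L' π q| + |Γ₂ L' π q - Γ₂ L' π' q|) :=
        Finset.sum_le_sum fun q _ => abs_sub_le _ _ _
    _ = (∑ q : S × A, |Γ₂ L π q - Γ₂ L' π q|) + ∑ q : S × A, |Γ₂ L' π q - Γ₂ L' π' q| :=
        Finset.sum_add_distrib
    _ ≤ (1 - ζ) * (∑ p : S × A, |L p - L' p|) + (1 - ζ) * D :=
        add_le_add h2 (keyB L' hL'.1 hL'.2)
    _ = (1 - ζ) * ((∑ p : S × A, |L p - L' p|) + D) := by ring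
end

section
/- (Existence and uniqueness of the mean-field equilibrium fixed point, Theorem 3.) Let S and A be nonempty finite sets, P : S × A → Δ(S) a transition kernel, ζ ∈ (0,1), and define Γ₂(L, π)(s', a') = ζ/(|S|·|A|) + (1 − ζ)·∑_{(s,a)} L(s,a)·P(s' | s, a')·π(a' | s) for L ∈ Δ(S × A) and policies π : S → Δ(A). Let λ : Δ(S × A) → ℝ satisfy |λ(L) − λ(L')| ≤ L_MF·‖L − L'‖₁, and let π̂ : ℝ → (S → Δ(A)) satisfy sup_{s} ‖π̂(x)(· | s) − π̂(y)(· | s)‖₁ ≤ L₁·|x − y| for all x, y ∈ ℝ. Define T : Δ(S × A) → Δ(S × A) by T(L) = Γ₂(L, π̂(λ(L))). If L₁·L_MF·(1 − ζ) + (1 − ζ) < 1, then T is a contraction on Δ(S × A) with respect to the ℓ¹ metric, with contraction constant L₁·L_MF·(1 − ζ) + (1 − ζ), and T admits a unique fixed point L* ∈ Δ(S × A). -/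
/-!
Splitting `L π − L' π' = (L − L') π + L' (π − π')` and summing out the stochastic kernel `P`
shows that `Γ₂` is `(1 − ζ)`-Lipschitz jointly in the mean field (ℓ¹) and the policy
(sup over states of ℓ¹). Composing with the Lipschitz bounds for the price `λ` and the policy map
`π̂` makes `T` a contraction of the standard simplex, which is closed in `ℓ¹ = PiLp 1`, so
Banach's fixed point theorem applies. Invariance of the simplex holds because `Γ₂(L, π)` is a
convex combination of the uniform distribution and the push-forward of `L`.
-/

open scoped NNReal
open Finset Set

theorem existsUnique_fixedPoint_of_lipschitzOnWith {X : Type*} [MetricSpace X] [CompleteSpace X]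
    {s : Set X} (hs : IsClosed s) (hne : s.Nonempty) {f : X → X} (hf : MapsTo f s s)
    {K : ℝ≥0} (hK : K < 1) (hlip : LipschitzOnWith K f s) : ∃! x, x ∈ s ∧ f x = x := by
  have : Nonempty s := hne.to_subtype
  have : CompleteSpace s := hs.completeSpace_coe
  have hc : ContractingWith K (hf.restrict f s s) := ⟨hK, hlip.mapsToRestrict hf⟩
  refine ⟨((ContractingWith.fixedPoint (hf.restrict f s s) hc : s) : X),
    ⟨Subtype.property _, congrArg Subtype.val hc.fixedPoint_isFixedPt⟩, ?_⟩
  rintro y ⟨hy, hfy⟩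
  exact congrArg Subtype.val (hc.fixedPoint_unique (x := ⟨y, hy⟩) (Subtype.ext hfy))

theorem existsUnique_fixedPoint_of_sum_abs_sub_le {ι : Type*} [Fintype ι] [Nonempty ι]
    {T : (ι → ℝ) → ι → ℝ} (hT : MapsTo T (stdSimplex ℝ ι) (stdSimplex ℝ ι)) {k : ℝ} (hk : k < 1)
    (hcontr : ∀ L L', L ∈ stdSimplex ℝ ι → L' ∈ stdSimplex ℝ ι →
      ∑ i, |T L i - T L' i| ≤ k * ∑ i, |L i - L' i|) :
    ∃! L, L ∈ stdSimplex ℝ ι ∧ T L = L := by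
  classical
  have hdist (x y : PiLp 1 (fun _ : ι => ℝ)) : dist x y = ∑ i, |x i - y i| := by
    simp only [PiLp.dist_eq_of_L1, Real.dist_eq]
  have hlip : LipschitzOnWith k.toNNReal
      (fun x : PiLp 1 (fun _ : ι => ℝ) => WithLp.toLp 1 (T x.ofLp))
      (WithLp.ofLp ⁻¹' stdSimplex ℝ ι) := by
    refine LipschitzOnWith.of_dist_le_mul fun x hx y hy => ?_
    rw [hdist, hdist, Real.coe_toNNReal']
    exact (hcontr _ _ hx hy).trans
      (mul_le_mul_of_nonneg_right (le_max_left _ _) (sum_nonneg fun _ _ => abs_nonneg _))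
  obtain ⟨x, ⟨hx, hfx⟩, huniq⟩ := existsUnique_fixedPoint_of_lipschitzOnWith
    ((isClosed_stdSimplex ℝ ι).preimage (PiLp.continuous_ofLp 1 _))
    ⟨WithLp.toLp 1 _, ite_eq_mem_stdSimplex ℝ (Classical.arbitrary ι)⟩
    (fun x hx => hT hx) (Real.toNNReal_lt_one.2 hk) hlip
  refine ⟨x.ofLp, ⟨hx, congrArg WithLp.ofLp hfx⟩, fun L ⟨hL, hTL⟩ => ?_⟩
  exact congrArg WithLp.ofLp (huniq (WithLp.toLp 1 L) ⟨hL, congrArg (WithLp.toLp 1) hTL⟩)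

theorem const_inv_card_mem_stdSimplex (ι : Type*) [Fintype ι] [Nonempty ι] :
    (fun _ => (Fintype.card ι : ℝ)⁻¹) ∈ stdSimplex ℝ ι := by
  refine ⟨fun _ => by positivity, ?_⟩
  rw [sum_const, card_univ, nsmul_eq_mul, mul_inv_cancel₀ (by exact_mod_cast Fintype.card_ne_zero)]

namespace MeanField

variable {S A : Type*} [Fintype S] [Fintype A]

/-- `P s a s'` is the transition probability `P(s' | s, a)`; `flow P L π` is the sum in `Γ₂`. -/
noncomputable def flow (P : S → A → S → ℝ) (L : S × A → ℝ) (π : S → A → ℝ) (q : S × A) : ℝ :=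
  ∑ p : S × A, L p * P p.1 q.2 q.1 * π p.1 q.2

noncomputable def consistency (P : S → A → S → ℝ) (ζ : ℝ) (L : S × A → ℝ) (π : S → A → ℝ)
    (q : S × A) : ℝ :=
  ζ / ((Fintype.card S : ℝ) * (Fintype.card A : ℝ)) + (1 - ζ) * flow P L π q

theorem sum_sum_mul_transition {P : S → A → S → ℝ} (hP : ∀ s a, P s a ∈ stdSimplex ℝ S)
    (g : S × A → A → ℝ) :
    ∑ q : S × A, ∑ p : S × A, g p q.2 * P p.1 q.2 q.1 = ∑ p : S × A, ∑ a, g p a := by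
  rw [sum_comm]
  refine sum_congr rfl fun p _ => ?_
  rw [Fintype.sum_prod_type_right]
  refine sum_congr rfl fun a _ => ?_
  dsimp only
  rw [← mul_sum, (hP p.1 a).2, mul_one]

theorem flow_mem_stdSimplex {P : S → A → S → ℝ} (hP : ∀ s a, P s a ∈ stdSimplex ℝ S)
    {π : S → A → ℝ} (hπ : ∀ s, π s ∈ stdSimplex ℝ A) {L : S × A → ℝ}
    (hL : L ∈ stdSimplex ℝ (S × A)) : flow P L π ∈ stdSimplex ℝ (S × A) := by
  refine ⟨fun q => sum_nonneg fun p _ =>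
    mul_nonneg (mul_nonneg (hL.1 p) ((hP _ _).1 _)) ((hπ _).1 _), ?_⟩
  calc ∑ q, flow P L π q = ∑ q : S × A, ∑ p : S × A, L p * π p.1 q.2 * P p.1 q.2 q.1 := by
        simp only [flow, mul_right_comm]
    _ = ∑ p, L p * ∑ a, π p.1 a := by
        rw [sum_sum_mul_transition hP (fun p a => L p * π p.1 a)]
        simp only [mul_sum]
    _ = 1 := by simp only [(hπ _).2, mul_one, hL.2]

theorem sum_abs_flow_sub_le {P : S → A → S → ℝ} (hP : ∀ s a, P s a ∈ stdSimplex ℝ S)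
    {π : S → A → ℝ} (hπ : ∀ s, π s ∈ stdSimplex ℝ A) (π' : S → A → ℝ) (L : S × A → ℝ)
    {L' : S × A → ℝ} (hL' : L' ∈ stdSimplex ℝ (S × A)) :
    ∑ q, |flow P L π q - flow P L' π' q| ≤
      ∑ p, |L p - L' p| + ⨆ s, ∑ a, |π s a - π' s a| := by
  set M := ⨆ s, ∑ a, |π s a - π' s a|
  have hM (s : S) : ∑ a, |π s a - π' s a| ≤ M :=
    le_ciSup (f := fun s => ∑ a, |π s a - π' s a|) (Finite.bddAbove_range _) s
  calc ∑ q, |flow P L π q - flow P L' π' q|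
      ≤ ∑ q : S × A, ∑ p : S × A, |L p * π p.1 q.2 - L' p * π' p.1 q.2| * P p.1 q.2 q.1 := by
        refine sum_le_sum fun q _ => ?_
        simp only [flow, ← sum_sub_distrib]
        refine (abs_sum_le_sum_abs _ _).trans (sum_le_sum fun p _ => ?_)
        rw [mul_right_comm (L p), mul_right_comm (L' p), ← sub_mul, abs_mul,
          abs_of_nonneg ((hP p.1 q.2).1 q.1)]
    _ = ∑ p : S × A, ∑ a, |L p * π p.1 a - L' p * π' p.1 a| :=
        sum_sum_mul_transition hP fun p a => |L p * π p.1 a - L' p * π' p.1 a|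
    _ ≤ ∑ p : S × A, ∑ a, (|L p - L' p| * π p.1 a + L' p * |π p.1 a - π' p.1 a|) := by
        refine sum_le_sum fun p _ => sum_le_sum fun a _ => ?_
        calc |L p * π p.1 a - L' p * π' p.1 a|
            = |(L p - L' p) * π p.1 a + L' p * (π p.1 a - π' p.1 a)| := by
              congr 1; ring
          _ ≤ _ := (abs_add_le _ _).trans_eq <| by
            rw [abs_mul, abs_mul, abs_of_nonneg ((hπ p.1).1 a), abs_of_nonneg (hL'.1 p)]
    _ ≤ ∑ p : S × A, (|L p - L' p| + L' p * M) := by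
        refine sum_le_sum fun p _ => ?_
        rw [sum_add_distrib, ← mul_sum, ← mul_sum, (hπ p.1).2, mul_one]
        exact add_le_add_right (mul_le_mul_of_nonneg_left (hM p.1) (hL'.1 p)) _
    _ = ∑ p, |L p - L' p| + M := by rw [sum_add_distrib, ← sum_mul, hL'.2, one_mul]

theorem consistency_mem_stdSimplex [Nonempty S] [Nonempty A] {P : S → A → S → ℝ}
    (hP : ∀ s a, P s a ∈ stdSimplex ℝ S) {ζ : ℝ} (hζ : ζ ∈ Icc (0 : ℝ) 1)
    {π : S → A → ℝ} (hπ : ∀ s, π s ∈ stdSimplex ℝ A) {L : S × A → ℝ}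
    (hL : L ∈ stdSimplex ℝ (S × A)) : consistency P ζ L π ∈ stdSimplex ℝ (S × A) := by
  have hmix : consistency P ζ L π =
      ζ • (fun _ => (Fintype.card (S × A) : ℝ)⁻¹) + (1 - ζ) • flow P L π := by
    funext q
    simp [consistency, Fintype.card_prod, div_eq_mul_inv]
  rw [hmix]
  exact convex_stdSimplex ℝ _ (const_inv_card_mem_stdSimplex _) (flow_mem_stdSimplex hP hπ hL)
    hζ.1 (sub_nonneg.2 hζ.2) (add_sub_cancel _ _)

theorem sum_abs_consistency_sub_le {P : S → A → S → ℝ} (hP : ∀ s a, P s a ∈ stdSimplex ℝ S)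
    {ζ : ℝ} (hζ : ζ ≤ 1) {π : S → A → ℝ} (hπ : ∀ s, π s ∈ stdSimplex ℝ A) (π' : S → A → ℝ)
    (L : S × A → ℝ) {L' : S × A → ℝ} (hL' : L' ∈ stdSimplex ℝ (S × A)) :
    ∑ q, |consistency P ζ L π q - consistency P ζ L' π' q| ≤
      (1 - ζ) * (∑ p, |L p - L' p| + ⨆ s, ∑ a, |π s a - π' s a|) := by
  have hζ' : 0 ≤ 1 - ζ := sub_nonneg.2 hζ
  simp only [consistency, add_sub_add_left_eq_sub, ← mul_sub, abs_mul, abs_of_nonneg hζ',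
    ← mul_sum]
  exact mul_le_mul_of_nonneg_left (sum_abs_flow_sub_le hP hπ π' L hL') hζ'

end MeanField

open MeanField

/-- Theorem 3, existence and uniqueness of the mean-field equilibrium
fixed point: with the consistency operator
`Γ₂(L,π)(s',a') = ζ/(|S||A|) + (1-ζ) ∑_{(s,a)} L(s,a) P(s'|s,a') π(a'|s)`, an
`L_MF`-Lipschitz price map `λ` on `Δ(S×A)`, an `L₁`-Lipschitz policy map `π̂`, and
`T(L) = Γ₂(L, π̂(λ(L)))`, if `L₁ L_MF (1-ζ) + (1-ζ) < 1` then `T` is a contraction on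
`Δ(S×A)` in the ℓ¹ metric with constant `L₁ L_MF (1-ζ) + (1-ζ)`, and `T` admits a
unique fixed point in `Δ(S×A)`. -/
theorem stmt14 {S A : Type*} [Fintype S] [Fintype A] [Nonempty S] [Nonempty A]
    (P : S → A → S → ℝ)
    (hP : ∀ s a, (∀ s', 0 ≤ P s a s') ∧ ∑ s', P s a s' = 1)
    (ζ : ℝ) (hζ : ζ ∈ Set.Ioo (0 : ℝ) 1)
    (Γ₂ : (S × A → ℝ) → (S → A → ℝ) → S × A → ℝ)
    (hΓ₂ : ∀ (L : S × A → ℝ) (π : S → A → ℝ) (q : S × A),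
      Γ₂ L π q = ζ / ((Fintype.card S : ℝ) * (Fintype.card A : ℝ)) +
        (1 - ζ) * ∑ p : S × A, L p * P p.1 q.2 q.1 * π p.1 q.2)
    (lmp : (S × A → ℝ) → ℝ) (LMF : ℝ)
    (hlmp : ∀ L L' : S × A → ℝ,
      ((∀ p, 0 ≤ L p) ∧ ∑ p, L p = 1) → ((∀ p, 0 ≤ L' p) ∧ ∑ p, L' p = 1) →
      |lmp L - lmp L'| ≤ LMF * ∑ p : S × A, |L p - L' p|)
    (pihat : ℝ → S → A → ℝ)
    (hpihat_dist : ∀ (x : ℝ) (s : S), (∀ a, 0 ≤ pihat x s a) ∧ ∑ a, pihat x s a = 1)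
    (L₁ : ℝ)
    (hpihat_lip : ∀ x y : ℝ,
      (⨆ s : S, ∑ a, |pihat x s a - pihat y s a|) ≤ L₁ * |x - y|)
    (T : (S × A → ℝ) → S × A → ℝ)
    (hT : ∀ L : S × A → ℝ, T L = Γ₂ L (pihat (lmp L)))
    (hcontr : L₁ * LMF * (1 - ζ) + (1 - ζ) < 1) :
    (∀ L L' : S × A → ℝ,
      ((∀ p, 0 ≤ L p) ∧ ∑ p, L p = 1) → ((∀ p, 0 ≤ L' p) ∧ ∑ p, L' p = 1) →
      ∑ q : S × A, |T L q - T L' q| ≤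
        (L₁ * LMF * (1 - ζ) + (1 - ζ)) * ∑ q : S × A, |L q - L' q|) ∧
    (∀ L : S × A → ℝ, ((∀ p, 0 ≤ L p) ∧ ∑ p, L p = 1) →
      ((∀ q, 0 ≤ T L q) ∧ ∑ q, T L q = 1)) ∧
    (∃! L : S × A → ℝ, ((∀ p, 0 ≤ L p) ∧ ∑ p, L p = 1) ∧ T L = L) := by
  obtain ⟨hζ0, hζ1⟩ := hζ
  have hζ' : 0 ≤ 1 - ζ := sub_nonneg.2 hζ1.le
  have hTL (L : S × A → ℝ) : T L = consistency P ζ L (pihat (lmp L)) := by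
    rw [hT]; funext q; exact hΓ₂ _ _ q
  have hL₁ : 0 ≤ L₁ := by
    simpa using (Real.iSup_nonneg fun s => sum_nonneg fun a _ => abs_nonneg
      (pihat 0 s a - pihat 1 s a)).trans (hpihat_lip 0 1)
  have hmaps : MapsTo T (stdSimplex ℝ (S × A)) (stdSimplex ℝ (S × A)) := fun L hL => by
    rw [hTL]; exact consistency_mem_stdSimplex hP ⟨hζ0.le, hζ1.le⟩ (hpihat_dist _) hL
  have hlip : ∀ L L', L ∈ stdSimplex ℝ (S × A) → L' ∈ stdSimplex ℝ (S × A) →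
      ∑ q, |T L q - T L' q| ≤ (L₁ * LMF * (1 - ζ) + (1 - ζ)) * ∑ q, |L q - L' q| := by
    intro L L' hL hL'
    calc ∑ q, |T L q - T L' q|
        ≤ (1 - ζ) * (∑ p, |L p - L' p| + ⨆ s, ∑ a, |pihat (lmp L) s a - pihat (lmp L') s a|) := by
          rw [hTL, hTL]; exact sum_abs_consistency_sub_le hP hζ1.le (hpihat_dist _) _ L hL'
      _ ≤ (1 - ζ) * (∑ p, |L p - L' p| + L₁ * (LMF * ∑ p, |L p - L' p|)) := by
          gcongr
          exact (hpihat_lip _ _).trans (mul_le_mul_of_nonneg_left (hlmp L L' hL hL') hL₁)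
      _ = (L₁ * LMF * (1 - ζ) + (1 - ζ)) * ∑ q, |L q - L' q| := by ring
  exact ⟨hlip, hmaps, existsUnique_fixedPoint_of_sum_abs_sub_le hmaps hcontr hlip⟩
end

section
/- Let A be a nonempty finite set, α > 0, and let Ω : Δ(A) → ℝ be the scaled negative entropy Ω(π) = α·∑_{a∈A} π(a)·log π(a) (with the convention 0·log 0 = 0). Then Ω is α-strongly convex on Δ(A) with respect to the ℓ¹ norm: for all π, π' ∈ Δ(A) and t ∈ [0,1], Ω(t·π + (1−t)·π') ≤ t·Ω(π) + (1−t)·Ω(π') − (α/2)·t·(1−t)·‖π − π'‖₁². -/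
/-!
Pinsker's inequality `(∑ |p - q|)² ≤ 2 KL(p ‖ q)` yields the strong convexity through the
compensation identity `t KL(π ‖ σ) + (1 - t) KL(π' ‖ σ) = t H(π) + (1 - t) H(π') - H(σ)` for the
mixture `σ = t π + (1 - t) π'` and `H(p) = ∑ p log p`, because `π - σ = (1 - t) (π - π')` and
`π' - σ = t (π' - π)`.

Pinsker's inequality follows by Cauchy–Schwarz with the weights `(p + 2 q) / 3` from the pointwise
bound `3 (x - y)² ≤ 2 (x + 2 y) (x log (x / y) - x + y)`. After scaling, this says that the convex
function `2 (x + 2) (x log x + 1 - x) - 3 (x - 1)²` is minimal at its critical point `x = 1`.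
-/

section

open Real InformationTheory Finset Set

noncomputable def pinskerGap (x : ℝ) : ℝ := 2 * (x + 2) * klFun x - 3 * (x - 1) ^ 2

lemma hasDerivAt_pinskerGap {x : ℝ} (hx : x ≠ 0) :
    HasDerivAt pinskerGap (2 * klFun x + 2 * (x + 2) * log x - 6 * (x - 1)) x := by
  have := ((((hasDerivAt_id' x).add_const 2).const_mul 2).fun_mul (hasDerivAt_klFun hx)).fun_sub
    ((((hasDerivAt_id' x).sub_const 1).fun_pow 2).const_mul 3)
  exact this.congr_deriv (by ring)

lemma convexOn_pinskerGap : ConvexOn ℝ (Ici 0) pinskerGap := by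
  refine convexOn_of_hasDerivWithinAt2_nonneg (convex_Ici 0)
    (f' := fun x ↦ 2 * klFun x + 2 * (x + 2) * log x - 6 * (x - 1))
    (f'' := fun x ↦ 4 * (log x + x⁻¹ - 1)) (by unfold pinskerGap klFun; fun_prop) ?_ ?_ ?_
  all_goals simp only [interior_Ici]
  · exact fun x hx ↦ (hasDerivAt_pinskerGap (ne_of_gt hx)).hasDerivWithinAt
  · intro x hx
    have hx0 : x ≠ 0 := ne_of_gt hx
    have := (((hasDerivAt_klFun hx0).const_mul 2).fun_add
      ((((hasDerivAt_id' x).add_const 2).const_mul 2).fun_mul (hasDerivAt_log hx0))).fun_sub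
      (((hasDerivAt_id' x).sub_const 1).const_mul 6)
    refine (this.congr_deriv ?_).hasDerivWithinAt
    field_simp
    ring
  · intro x hx
    linarith [one_sub_inv_le_log_of_pos (mem_Ioi.1 hx)]

lemma three_mul_sq_sub_one_le_klFun {x : ℝ} (hx : 0 ≤ x) :
    3 * (x - 1) ^ 2 ≤ 2 * (x + 2) * klFun x := by
  have hcrit : derivWithin pinskerGap (Ioi 1) 1 = 0 := by
    rw [(hasDerivAt_pinskerGap one_ne_zero).hasDerivWithinAt.derivWithin
      (uniqueDiffWithinAt_Ioi 1)]
    simp [klFun_one]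
  have := convexOn_pinskerGap.isMinOn_of_rightDeriv_eq_zero (by simp) hcrit (mem_Ici.2 hx)
  simp only [mem_ofPred_eq, pinskerGap, klFun_one] at this
  linarith

noncomputable def klSummand (x y : ℝ) : ℝ := x * log x - x * log y - x + y

lemma mul_klFun_div (x : ℝ) {y : ℝ} (hy : y ≠ 0) : y * klFun (x / y) = klSummand x y := by
  rcases eq_or_ne x 0 with rfl | hx
  · simp [klSummand, klFun_zero]
  rw [klSummand, klFun_apply, log_div hx hy]
  field_simp
  ring

lemma three_mul_sq_sub_le_klSummand {x y : ℝ} (hx : 0 ≤ x) (hy : 0 ≤ y) (hxy : y = 0 → x = 0) :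
    3 * (x - y) ^ 2 ≤ 2 * (x + 2 * y) * klSummand x y := by
  rcases hy.eq_or_lt with rfl | hy
  · simp [klSummand, hxy rfl]
  have hsq : y ^ 2 * (x / y - 1) ^ 2 = (x - y) ^ 2 := by field_simp
  have hlin : y * (x / y + 2) = x + 2 * y := by field_simp
  rw [← mul_klFun_div x hy.ne', ← hsq, ← hlin]
  linear_combination y ^ 2 * three_mul_sq_sub_one_le_klFun (div_nonneg hx hy.le)

lemma klSummand_nonneg {x y : ℝ} (hx : 0 ≤ x) (hy : 0 ≤ y) (hxy : y = 0 → x = 0) :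
    0 ≤ klSummand x y := by
  rcases hy.eq_or_lt with rfl | hy
  · simp [klSummand, hxy rfl]
  rw [← mul_klFun_div x hy.ne']
  exact mul_nonneg hy.le (klFun_nonneg (div_nonneg hx hy.le))

variable {A : Type*} [Fintype A]

noncomputable def discreteKL (p q : A → ℝ) : ℝ := ∑ a, (p a * log (p a) - p a * log (q a))

theorem sq_sum_abs_sub_le_two_mul_discreteKL {p q : A → ℝ}
    (hp : ∀ a, 0 ≤ p a) (hps : ∑ a, p a = 1) (hq : ∀ a, 0 ≤ q a) (hqs : ∑ a, q a = 1)
    (hpq : ∀ a, q a = 0 → p a = 0) :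
    (∑ a, |p a - q a|) ^ 2 ≤ 2 * discreteKL p q := by
  have hweight : ∑ a, (p a + 2 * q a) / 3 = 1 := by
    rw [← sum_div, sum_add_distrib, ← mul_sum, hps, hqs]
    norm_num
  have hkl : ∑ a, 2 * klSummand (p a) (q a) = 2 * discreteKL p q := by
    simp only [klSummand, discreteKL, ← mul_sum, sum_add_distrib, sum_sub_distrib, hps, hqs]
    ring
  calc (∑ a, |p a - q a|) ^ 2
      ≤ (∑ a, (p a + 2 * q a) / 3) * ∑ a, 2 * klSummand (p a) (q a) :=
        sum_sq_le_sum_mul_sum_of_sq_le_mul _ (fun a _ ↦ by linarith [hp a, hq a])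
          (fun a _ ↦ by linarith [klSummand_nonneg (hp a) (hq a) (hpq a)])
          (fun a _ ↦ by
            linarith [sq_abs (p a - q a), three_mul_sq_sub_le_klSummand (hp a) (hq a) (hpq a)])
    _ = 2 * discreteKL p q := by rw [hweight, one_mul, hkl]

lemma mul_discreteKL_add_mul_discreteKL_mixture (p q : A → ℝ) (t : ℝ) :
    t * discreteKL p (t • p + (1 - t) • q) + (1 - t) * discreteKL q (t • p + (1 - t) • q) =
      t * ∑ a, p a * log (p a) + (1 - t) * ∑ a, q a * log (q a) -
        ∑ a, (t • p + (1 - t) • q) a * log ((t • p + (1 - t) • q) a) := by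
  simp only [discreteKL, mul_sum, ← sum_add_distrib, ← sum_sub_distrib, Pi.add_apply,
    Pi.smul_apply, smul_eq_mul]
  exact sum_congr rfl fun a _ ↦ by ring

lemma mul_sq_le_two_mul_discreteKL_mixture {p q : A → ℝ} {t : ℝ}
    (hp : ∀ a, 0 ≤ p a) (hps : ∑ a, p a = 1) (hq : ∀ a, 0 ≤ q a) (hqs : ∑ a, q a = 1)
    (ht0 : 0 ≤ t) (ht1 : t ≤ 1) :
    t * ((1 - t) * ∑ a, |p a - q a|) ^ 2 ≤ 2 * t * discreteKL p (t • p + (1 - t) • q) := by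
  rcases ht0.eq_or_lt with rfl | ht0
  · simp
  set σ := t • p + (1 - t) • q
  have hσ : ∀ a, σ a = t * p a + (1 - t) * q a := fun a ↦ rfl
  have hσ_nonneg : ∀ a, 0 ≤ σ a := fun a ↦ by
    rw [hσ]
    have := hp a; have := hq a; have := sub_nonneg.2 ht1
    positivity
  have hσ_sum : ∑ a, σ a = 1 := by
    simp only [hσ, sum_add_distrib, ← mul_sum, hps, hqs]
    ring
  have hpσ : ∀ a, σ a = 0 → p a = 0 := fun a h ↦ by
    rw [hσ] at h
    nlinarith [hp a, hq a]
  have htv : ∑ a, |p a - σ a| = (1 - t) * ∑ a, |p a - q a| := by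
    rw [mul_sum]
    refine sum_congr rfl fun a _ ↦ ?_
    rw [hσ, show p a - (t * p a + (1 - t) * q a) = (1 - t) * (p a - q a) by ring, abs_mul,
      abs_of_nonneg (sub_nonneg.2 ht1)]
  have hpinsker := sq_sum_abs_sub_le_two_mul_discreteKL hp hps hσ_nonneg hσ_sum hpσ
  rw [htv] at hpinsker
  linear_combination t * hpinsker

end

theorem stmt16_general {A : Type*} [Fintype A]
    (α : ℝ) (hα : 0 < α)
    (Ω : (A → ℝ) → ℝ)
    (hΩ : ∀ π : A → ℝ, Ω π = α * ∑ a, π a * Real.log (π a)) :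
    ∀ π π' : A → ℝ, (∀ a, 0 ≤ π a) → ∑ a, π a = 1 →
      (∀ a, 0 ≤ π' a) → ∑ a, π' a = 1 →
      ∀ t ∈ Set.Icc (0 : ℝ) 1,
        Ω (t • π + (1 - t) • π') ≤
          t * Ω π + (1 - t) * Ω π' -
            (α / 2) * t * (1 - t) * (∑ a, |π a - π' a|) ^ 2 := by
  intro π π' hπ hπs hπ' hπ's t ⟨ht0, ht1⟩
  have h₁ := mul_sq_le_two_mul_discreteKL_mixture hπ hπs hπ' hπ's ht0 ht1
  have h₂ := mul_sq_le_two_mul_discreteKL_mixture hπ' hπ's hπ hπs (sub_nonneg.2 ht1)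
    (sub_le_self 1 ht0)
  rw [sub_sub_cancel, add_comm ((1 - t) • π'),
    Finset.sum_congr rfl fun a _ ↦ abs_sub_comm (π' a) (π a)] at h₂
  have hmix := mul_discreteKL_add_mul_discreteKL_mixture π π' t
  rw [hΩ, hΩ, hΩ]
  linear_combination (α / 2) * (h₁ + h₂) + α * hmix

/-- The scaled negative entropy `Ω(π) = α ∑_a π(a) log π(a)` (with
`0 log 0 = 0`, which is Lean's convention since `Real.log 0 = 0`) is α-strongly convex
on the probability simplex `Δ(A)` with respect to the ℓ¹ norm. -/
theorem stmt16 {A : Type*} [Fintype A] [Nonempty A]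
    (α : ℝ) (hα : 0 < α)
    (Ω : (A → ℝ) → ℝ)
    (hΩ : ∀ π : A → ℝ, Ω π = α * ∑ a, π a * Real.log (π a)) :
    ∀ π π' : A → ℝ, (∀ a, 0 ≤ π a) → ∑ a, π a = 1 →
      (∀ a, 0 ≤ π' a) → ∑ a, π' a = 1 →
      ∀ t ∈ Set.Icc (0 : ℝ) 1,
        Ω (t • π + (1 - t) • π') ≤
          t * Ω π + (1 - t) * Ω π' -
            (α / 2) * t * (1 - t) * (∑ a, |π a - π' a|) ^ 2 :=
  stmt16_general α hα Ω hΩ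
end
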